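/- arXiv:0904.0562 — 2 statements merged into one kernel-verified Lean document; each statement's English description precedes it below -/
import Mathlib

section
/- Any smooth word w over {a,b} has both a left smooth extension and a right smooth extension; that is, there exist letters α, β in {a,b} such that αw and wβ are smooth. -/
/-- Run-length encoding Δ: the list of lengths of maximal runs. -/
def rle (w : List ℕ) : List ℕ := (w.splitBy (· == ·)).map List.length

/-- Trim the first entry if it is less than `b`. -/
def trimF (b : ℕ) : List ℕ → List ℕ
  | [] => []
  | x :: xs => if x < b then xs else x :: xs

/-- The derivative D: run lengths, dropping boundary runs shorter than `b`. -/
def derW (b : ℕ) (w : List ℕ) : List ℕ :=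
  (trimF b ((trimF b (rle w)).reverse)).reverse

/-- `w` is a word over the alphabet `{a, b}`. -/
def WordOver (a b : ℕ) (w : List ℕ) : Prop := ∀ c ∈ w, c = a ∨ c = b

/-- `w` is differentiable: all runs have length at most `b`, and all
interior runs have length exactly `a` or `b`. -/
def DiffW (a b : ℕ) (w : List ℕ) : Prop :=
  (∀ t ∈ rle w, t ≤ b) ∧ (∀ t ∈ ((rle w).drop 1).dropLast, t = a ∨ t = b)

/-- The closure ŵ: extend the first (resp. last) run to length `b`
if its length is strictly greater than `a`. -/
def clos (a b : ℕ) (w : List ℕ) : List ℕ :=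
  (if a < (rle w).headD 0 then List.replicate (b - (rle w).headD 0) (w.headD 0) else [])
    ++ w ++
  (if a < (rle w).getLastD 0 then List.replicate (b - (rle w).getLastD 0) (w.getLastD 0) else [])

/-- ρ(w) = D(ŵ). -/
def rhoW (a b : ℕ) (w : List ℕ) : List ℕ := derW b (clos a b w)

/-- `w` is a smooth (C^∞_{a,b}) word: it is a word over `{a,b}`, every iterated
closure is differentiable, and iterating ρ eventually yields the empty word. -/
def SmoothW (a b : ℕ) (w : List ℕ) : Prop :=
  WordOver a b w ∧ (∀ k : ℕ, DiffW a b (clos a b ((rhoW a b)^[k] w))) ∧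
    ∃ k : ℕ, (rhoW a b)^[k] w = []

/-- n-th power of a word (n-fold concatenation). -/
def lpow (u : List ℕ) (n : ℕ) : List ℕ := (List.replicate n u).flatten

/-- The pseudo-inverse Δ_α^{-1}: maps u₁u₂u₃⋯ to α^{u₁} β^{u₂} α^{u₃} ⋯ . -/
def dinv (α β : ℕ) : List ℕ → List ℕ
  | [] => []
  | t :: ts => List.replicate t α ++ dinv β α ts

/-!
Smoothness of a word is governed by its run lengths. The closure lengthens a boundary run of
length `> a` to `b`, so when `w` has several runs and a differentiable closure, `ρ(w)` is the
list of interior runs of `w`, with a `b` added at each end whose boundary run is longer than `a`.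
Appending a letter either lengthens the last run `t` by one or starts a new run of length one,
and the letter can be chosen so that `ρ` does not change, except when `t = a` and `w` has
several runs. In that case the two choices give `ρ(w) a` and `ρ(w) b`, so it suffices that
`ρ(w)` has a smooth right extension, which holds by induction on the number of applications of
`ρ` that reach the empty word. Left extensions follow by reversal, which commutes with `ρ`.
-/

open List

theorem rle_append {l m : List ℕ} (h : ∀ x ∈ l.getLast?, ∀ y ∈ m.head?, x ≠ y) :
    rle (l ++ m) = rle l ++ rle m := by
  simp only [rle, splitBy_append (fun x hx y hy => beq_eq_false_iff_ne.2 (h x hx y hy)),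
    map_append]

theorem rle_replicate {n : ℕ} (c : ℕ) (hn : 0 < n) : rle (replicate n c) = [n] := by
  rw [rle, splitBy_of_isChain (by simpa using hn.ne')
    (isChain_replicate_of_rel n (beq_self_eq_true c))]
  simp

theorem rle_reverse (w : List ℕ) : rle w.reverse = (rle w).reverse := by
  have : w.reverse.splitBy (· == ·) = ((w.splitBy (· == ·)).map reverse).reverse := by
    rw [splitBy_eq_iff]
    refine ⟨?_, ?_, ?_, ?_⟩
    · simp [flatten_reverse, flatten_splitBy]
    · simp [nil_notMem_splitBy]
    · simp only [mem_reverse, mem_map]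
      rintro _ ⟨g, hg, rfl⟩
      rw [isChain_reverse]
      refine (isChain_of_mem_splitBy hg).imp fun x y h => ?_
      rw [beq_iff_eq] at h ⊢
      exact h.symm
    · rw [isChain_reverse, isChain_map]
      refine (isChain_getLast_head_splitBy _ w).imp fun g g' ⟨hg, hg', h⟩ => ?_
      refine ⟨by simpa using hg', by simpa using hg, ?_⟩
      rw [getLast_reverse, head_reverse, beq_eq_false_iff_ne] at *
      exact Ne.symm h
  simp [rle, this, map_reverse]

theorem exists_eq_replicate_append {w : List ℕ} (hw : w ≠ []) :
    ∃ n c w', 0 < n ∧ w = replicate n c ++ w' ∧ w'.head? ≠ some c := by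
  induction w with
  | nil => exact absurd rfl hw
  | cons c w ih =>
    rcases eq_or_ne w.head? (some c) with hc | hc
    · obtain ⟨n, d, w', hn, rfl, hw'⟩ := ih (by rintro rfl; simp at hc)
      obtain rfl : d = c := by simpa [head?_append, head?_replicate, hn.ne'] using hc
      exact ⟨n + 1, d, w', n.succ_pos, by simp [replicate_succ], hw'⟩
    · exact ⟨1, c, w, one_pos, rfl, hc⟩

theorem exists_eq_append_replicate {w : List ℕ} (hw : w ≠ []) :
    ∃ n c u, 0 < n ∧ w = u ++ replicate n c ∧ u.getLast? ≠ some c := by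
  obtain ⟨n, c, v, hn, hv, hc⟩ := exists_eq_replicate_append (reverse_ne_nil_iff.2 hw)
  exact ⟨n, c, v.reverse, hn, by simpa using congrArg reverse hv, by simpa using hc⟩

theorem rle_replicate_append_of_head?_ne {w : List ℕ} {n c : ℕ} (hn : 0 < n)
    (hc : w.head? ≠ some c) : rle (replicate n c ++ w) = n :: rle w := by
  rw [rle_append fun x hx y hy => ?_, rle_replicate c hn]
  · rfl
  · rintro rfl
    simp only [getLast?_replicate, hn.ne', if_false, Option.mem_some_iff] at hx
    exact hc (hx ▸ hy)

theorem rle_append_replicate_of_getLast?_ne {u : List ℕ} {n c : ℕ} (hn : 0 < n)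
    (hc : u.getLast? ≠ some c) : rle (u ++ replicate n c) = rle u ++ [n] := by
  rw [rle_append fun x hx y hy => ?_, rle_replicate c hn]
  rintro rfl
  simp only [head?_replicate, hn.ne', if_false, Option.mem_some_iff] at hy
  exact hc (hy ▸ hx)

theorem rle_replicate_append {w r : List ℕ} {n c : ℕ} (p : ℕ) (hw : rle w = n :: r)
    (hc : w.head? = some c) : rle (replicate p c ++ w) = (p + n) :: r := by
  obtain ⟨m, d, w', hm, rfl, hw'⟩ :=
    exists_eq_replicate_append (w := w) (by rintro rfl; simp at hc)
  obtain rfl : d = c := by simpa [head?_append, head?_replicate, hm.ne'] using hc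
  rw [rle_replicate_append_of_head?_ne hm hw', cons.injEq] at hw
  rw [← append_assoc, ← replicate_add, rle_replicate_append_of_head?_ne (by omega) hw', hw.1,
    hw.2]

theorem rle_append_replicate {u r : List ℕ} {n c : ℕ} (p : ℕ) (hu : rle u = r ++ [n])
    (hc : u.getLast? = some c) : rle (u ++ replicate p c) = r ++ [n + p] := by
  obtain ⟨m, d, u', hm, rfl, hu'⟩ :=
    exists_eq_append_replicate (w := u) (by rintro rfl; simp at hc)
  obtain rfl : d = c := by simpa [getLast?_append, getLast?_replicate, hm.ne'] using hc
  rw [rle_append_replicate_of_getLast?_ne hm hu'] at hu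
  obtain ⟨rfl, ⟨rfl⟩⟩ := append_inj' hu rfl
  rw [append_assoc, ← replicate_add, rle_append_replicate_of_getLast?_ne (by omega) hu']

theorem rle_ne_nil {w : List ℕ} (hw : w ≠ []) : rle w ≠ [] := by
  simpa [rle] using hw

theorem head?_eq_some_headD {w : List ℕ} (hw : w ≠ []) : w.head? = some (w.headD 0) := by
  cases w with
  | nil => exact absurd rfl hw
  | cons c w => rfl

theorem getLast?_eq_some_getLastD {w : List ℕ} (hw : w ≠ []) :
    w.getLast? = some (w.getLastD 0) := by
  rw [getLastD_eq_getLast?, getLast?_eq_some_getLast hw, Option.getD_some]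

theorem eq_nil_or_eq_singleton_or_eq_cons_append (l : List ℕ) :
    l = [] ∨ (∃ x, l = [x]) ∨ ∃ x mm y, l = x :: (mm ++ [y]) := by
  rcases l with _ | ⟨x, l⟩
  · exact Or.inl rfl
  rcases eq_nil_or_concat l with rfl | ⟨mm, y, rfl⟩
  · exact Or.inr (Or.inl ⟨x, rfl⟩)
  · exact Or.inr (Or.inr ⟨x, mm, y, by simp⟩)

def closPad (a b t : ℕ) : ℕ := if a < t then b - t else 0

/-- A boundary run of length `t ≤ b` survives in `ρ` (as `b`) iff the closure lengthened it. -/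
def rhoEnd (a b t : ℕ) : List ℕ := if a < t then [b] else []

section Closure

variable {a b : ℕ}

theorem rhoEnd_of_le {t : ℕ} (ht : t ≤ a) : rhoEnd a b t = [] := if_neg (by omega)

theorem rhoEnd_of_lt {t : ℕ} (ht : a < t) : rhoEnd a b t = [b] := if_pos ht

theorem add_closPad_le_iff {t : ℕ} : t + closPad a b t ≤ b ↔ t ≤ b := by
  unfold closPad; split_ifs <;> omega

theorem derW_end_eq_rhoEnd {t : ℕ} (hab : a < b) (ht : t ≤ b) :
    (if t + closPad a b t < b then [] else [t + closPad a b t]) = rhoEnd a b t := by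
  by_cases hat : a < t
  · have hpad : t + closPad a b t = b := by rw [closPad, if_pos hat]; omega
    rw [hpad, if_neg (lt_irrefl b), rhoEnd_of_lt hat]
  · rw [closPad, if_neg hat, add_zero, if_pos (by omega), rhoEnd_of_le (not_lt.1 hat)]

theorem clos_eq (w : List ℕ) :
    clos a b w = replicate (closPad a b ((rle w).headD 0)) (w.headD 0) ++ w ++
      replicate (closPad a b ((rle w).getLastD 0)) (w.getLastD 0) := by
  unfold clos closPad
  split_ifs <;> simp

theorem rle_clos_of_rle_eq {w mm : List ℕ} {h t : ℕ} (hw : rle w = h :: (mm ++ [t])) :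
    rle (clos a b w) = (h + closPad a b h) :: (mm ++ [t + closPad a b t]) := by
  have hne : w ≠ [] := by rintro rfl; simp [rle] at hw
  have hlast : rle (w ++ replicate (closPad a b t) (w.getLastD 0)) =
      h :: (mm ++ [t + closPad a b t]) := by
    rw [← cons_append, rle_append_replicate _ (by rw [hw, cons_append])
      (getLast?_eq_some_getLastD hne)]
  have hend : (h :: (mm ++ [t])).getLastD 0 = t := by
    rw [getLastD_eq_getLast?, ← cons_append, getLast?_concat]; rfl
  rw [clos_eq, hw, headD_cons, hend, append_assoc, rle_replicate_append _ hlast (by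
    rw [head?_append_of_ne_nil _ hne, head?_eq_some_headD hne]), add_comm]

theorem rle_clos_of_rle_eq_singleton {w : List ℕ} {t : ℕ} (hw : rle w = [t]) :
    rle (clos a b w) = [t + 2 * closPad a b t] := by
  have hne : w ≠ [] := by rintro rfl; simp [rle] at hw
  have hlast : rle (w ++ replicate (closPad a b t) (w.getLastD 0)) = [t + closPad a b t] :=
    rle_append_replicate (r := []) _ hw (getLast?_eq_some_getLastD hne)
  rw [clos_eq, hw, headD_cons, show ([t] : List ℕ).getLastD 0 = t from rfl, append_assoc,
    rle_replicate_append _ hlast (by rw [head?_append_of_ne_nil _ hne, head?_eq_some_headD hne])]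
  congr 1
  omega

theorem diffW_iff_of_rle_eq {v mm : List ℕ} {h t : ℕ} (hab : a ≤ b)
    (hv : rle v = h :: (mm ++ [t])) :
    DiffW a b v ↔ h ≤ b ∧ t ≤ b ∧ ∀ s ∈ mm, s = a ∨ s = b := by
  simp only [DiffW, hv, drop_one, tail_cons, dropLast_concat, forall_mem_cons, forall_mem_append]
  constructor
  · rintro ⟨⟨hh, -, ht, -⟩, hmm⟩
    exact ⟨hh, ht, hmm⟩
  · rintro ⟨hh, ht, hmm⟩
    refine ⟨⟨hh, fun s hs => ?_, ht, by simp⟩, hmm⟩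
    rcases hmm s hs with rfl | rfl <;> omega

theorem diffW_iff_of_rle_eq_singleton {v : List ℕ} {t : ℕ} (hv : rle v = [t]) :
    DiffW a b v ↔ t ≤ b := by
  simp [DiffW, hv]

theorem derW_of_rle_eq {v mm : List ℕ} {h t : ℕ} (hv : rle v = h :: (mm ++ [t])) :
    derW b v = (if h < b then [] else [h]) ++ mm ++ (if t < b then [] else [t]) := by
  rw [derW, hv]
  by_cases hh : h < b <;> by_cases ht : t < b <;> simp [trimF, hh, ht, reverse_append]

theorem derW_of_rle_eq_singleton {v : List ℕ} {t : ℕ} (hv : rle v = [t]) :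
    derW b v = if t < b then [] else [t] := by
  rw [derW, hv]
  by_cases ht : t < b <;> simp [trimF, ht]

theorem diffW_clos_iff_of_rle_eq {w mm : List ℕ} {h t : ℕ} (hab : a ≤ b)
    (hw : rle w = h :: (mm ++ [t])) :
    DiffW a b (clos a b w) ↔ h ≤ b ∧ t ≤ b ∧ ∀ s ∈ mm, s = a ∨ s = b := by
  rw [diffW_iff_of_rle_eq hab (rle_clos_of_rle_eq hw), add_closPad_le_iff, add_closPad_le_iff]

theorem diffW_clos_iff_of_rle_eq_singleton {w : List ℕ} {t : ℕ} (hab : a < b)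
    (hw : rle w = [t]) : DiffW a b (clos a b w) ↔ t ≤ a ∨ t = b := by
  rw [diffW_iff_of_rle_eq_singleton (rle_clos_of_rle_eq_singleton hw), closPad]
  split_ifs <;> omega

theorem rhoW_of_rle_eq {w mm : List ℕ} {h t : ℕ} (hab : a < b) (hw : rle w = h :: (mm ++ [t]))
    (hh : h ≤ b) (ht : t ≤ b) : rhoW a b w = rhoEnd a b h ++ mm ++ rhoEnd a b t := by
  rw [rhoW, derW_of_rle_eq (rle_clos_of_rle_eq hw), derW_end_eq_rhoEnd hab hh,
    derW_end_eq_rhoEnd hab ht]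

theorem rhoW_of_rle_eq_singleton {w : List ℕ} {t : ℕ} (hab : a < b) (hw : rle w = [t])
    (ht : t ≤ a) : rhoW a b w = [] := by
  have hpad : closPad a b t = 0 := if_neg (by omega)
  rw [rhoW, derW_of_rle_eq_singleton (rle_clos_of_rle_eq_singleton hw), hpad, if_pos (by omega)]

end Closure

section Smooth

variable {a b : ℕ}

theorem DiffW.wordOver_derW {v : List ℕ} (hab : a ≤ b) (hv : DiffW a b v) :
    WordOver a b (derW b v) := by
  have hend : ∀ t ≤ b, ∀ s ∈ (if t < b then [] else [t]), s = a ∨ s = b := by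
    intro t ht s hs
    split_ifs at hs with htb
    · simp at hs
    · rw [mem_singleton.1 hs]; omega
  rcases eq_nil_or_eq_singleton_or_eq_cons_append (rle v) with hr | ⟨t, hr⟩ | ⟨h, mm, t, hr⟩
  · simp [derW, hr, trimF, WordOver]
  · rw [derW_of_rle_eq_singleton hr]
    exact hend t ((diffW_iff_of_rle_eq_singleton hr).1 hv)
  · obtain ⟨hh, ht, hmm⟩ := (diffW_iff_of_rle_eq hab hr).1 hv
    rw [derW_of_rle_eq hr]
    intro s hs
    rcases mem_append.1 hs with hs | hs
    · rcases mem_append.1 hs with hs | hs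
      exacts [hend h hh s hs, hmm s hs]
    · exact hend t ht s hs

theorem rhoW_nil : rhoW a b [] = [] := rfl

theorem smoothW_nil : SmoothW a b [] := by
  refine ⟨by simp [WordOver], fun k => ?_, 0, rfl⟩
  rw [Function.iterate_fixed rhoW_nil]
  simp [DiffW, clos, rle]

theorem SmoothW.rho (hab : a ≤ b) {w : List ℕ} (hw : SmoothW a b w) :
    SmoothW a b (rhoW a b w) := by
  obtain ⟨-, hd, k, hk⟩ := hw
  refine ⟨(hd 0).wordOver_derW hab, fun j => hd (j + 1), ?_⟩
  cases k with
  | zero => exact ⟨0, by subst hk; rfl⟩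
  | succ k => exact ⟨k, hk⟩

theorem SmoothW.of_rhoW {v : List ℕ} (hv : WordOver a b v) (hd : DiffW a b (clos a b v))
    (hr : SmoothW a b (rhoW a b v)) : SmoothW a b v := by
  obtain ⟨-, hrd, k, hk⟩ := hr
  exact ⟨hv, fun j => j.casesOn hd hrd, k + 1, hk⟩

theorem smoothW_of_rle_eq {v mm : List ℕ} {h t : ℕ} (hab : a < b) (hv : WordOver a b v)
    (hrle : rle v = h :: (mm ++ [t])) (hh : h ≤ b) (ht : t ≤ b)
    (hmm : ∀ s ∈ mm, s = a ∨ s = b) (hρ : SmoothW a b (rhoEnd a b h ++ mm ++ rhoEnd a b t)) :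
    SmoothW a b v :=
  .of_rhoW hv ((diffW_clos_iff_of_rle_eq hab.le hrle).2 ⟨hh, ht, hmm⟩)
    (by rwa [rhoW_of_rle_eq hab hrle hh ht])

theorem smoothW_of_rle_eq_singleton {v : List ℕ} {t : ℕ} (hab : a < b) (hv : WordOver a b v)
    (hrle : rle v = [t]) (ht : t ≤ a) : SmoothW a b v :=
  .of_rhoW hv ((diffW_clos_iff_of_rle_eq_singleton hab hrle).2 (Or.inl ht))
    (by rw [rhoW_of_rle_eq_singleton hab hrle ht]; exact smoothW_nil)

theorem WordOver.append_singleton {w : List ℕ} {β : ℕ} (hw : WordOver a b w)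
    (hβ : β = a ∨ β = b) : WordOver a b (w ++ [β]) := by
  intro c hc
  rcases mem_append.1 hc with hc | hc
  exacts [hw c hc, mem_singleton.1 hc ▸ hβ]

theorem exists_letter_ne (hab : a ≠ b) (c : ℕ) : ∃ d, (d = a ∨ d = b) ∧ d ≠ c := by
  by_cases hc : c = a
  · exact ⟨b, Or.inr rfl, hc ▸ hab.symm⟩
  · exact ⟨a, Or.inl rfl, Ne.symm hc⟩

end Smooth

section Extension

variable {a b : ℕ}

theorem exists_smoothW_replicate_append (ha : 0 < a) (hab : a < b) {t c : ℕ} (ht : 0 < t)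
    (hw : SmoothW a b (replicate t c)) :
    ∃ β, (β = a ∨ β = b) ∧ SmoothW a b (replicate t c ++ [β]) := by
  have hc : c = a ∨ c = b := hw.1 c (mem_replicate.2 ⟨ht.ne', rfl⟩)
  obtain ⟨d, hd, hdc⟩ := exists_letter_ne hab.ne c
  have hrle_d : rle (replicate t c ++ [d]) = t :: ([] ++ [1]) := by
    rw [← replicate_one, rle_append_replicate_of_getLast?_ne one_pos
      (by simpa [getLast?_replicate, ht.ne'] using hdc.symm), rle_replicate c ht]
    rfl
  rcases lt_trichotomy t a with hta | rfl | hat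
  · refine ⟨c, hc, smoothW_of_rle_eq_singleton hab (hw.1.append_singleton hc) ?_ hta⟩
    rw [← replicate_succ', rle_replicate c t.succ_pos]
  · refine ⟨d, hd, smoothW_of_rle_eq hab (hw.1.append_singleton hd) hrle_d hab.le (by omega)
      (by simp) ?_⟩
    rw [rhoEnd_of_le le_rfl, rhoEnd_of_le ha]
    exact smoothW_nil
  · obtain rfl : b = t := (((diffW_clos_iff_of_rle_eq_singleton hab (rle_replicate c ht)).1
      (hw.2.1 0)).resolve_left (by omega)).symm
    refine ⟨d, hd, smoothW_of_rle_eq hab (hw.1.append_singleton hd) hrle_d le_rfl (by omega)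
      (by simp) ?_⟩
    rw [rhoEnd_of_lt hat, rhoEnd_of_le ha]
    exact smoothW_of_rle_eq_singleton hab (by simp [WordOver]) (rle_replicate b one_pos) ha

theorem exists_smoothW_append_replicate_of_rho (ha : 0 < a) (hab : a < b) {u : List ℕ} {t c : ℕ}
    (hu : u ≠ []) (huc : u.getLast? ≠ some c) (ht : 0 < t)
    (hw : SmoothW a b (u ++ replicate t c))
    (hρ : ∃ γ, (γ = a ∨ γ = b) ∧ SmoothW a b (rhoW a b (u ++ replicate t c) ++ [γ])) :
    ∃ β, (β = a ∨ β = b) ∧ SmoothW a b (u ++ replicate t c ++ [β]) := by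
  obtain ⟨h, mm, hu'⟩ := exists_cons_of_ne_nil (rle_ne_nil hu)
  have hc : c = a ∨ c = b := hw.1 c (mem_append_right _ (mem_replicate.2 ⟨ht.ne', rfl⟩))
  obtain ⟨d, hd, hdc⟩ := exists_letter_ne hab.ne c
  have hrle : rle (u ++ replicate t c) = h :: (mm ++ [t]) := by
    rw [rle_append_replicate_of_getLast?_ne ht huc, hu', cons_append]
  have hrle_c : rle (u ++ replicate t c ++ [c]) = h :: (mm ++ [t + 1]) := by
    rw [append_assoc, ← replicate_succ', rle_append_replicate_of_getLast?_ne t.succ_pos huc, hu',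
      cons_append]
  have hrle_d : rle (u ++ replicate t c ++ [d]) = h :: ((mm ++ [t]) ++ [1]) := by
    rw [← replicate_one, rle_append_replicate_of_getLast?_ne one_pos (by
      simpa [getLast?_append, getLast?_replicate, ht.ne'] using hdc.symm), hrle, cons_append]
  obtain ⟨hh, htb, hmm⟩ := (diffW_clos_iff_of_rle_eq hab.le hrle).1 (hw.2.1 0)
  have hρw : rhoW a b (u ++ replicate t c) = rhoEnd a b h ++ mm ++ rhoEnd a b t :=
    rhoW_of_rle_eq hab hrle hh htb
  have hsw : SmoothW a b (rhoEnd a b h ++ mm ++ rhoEnd a b t) := hρw ▸ hw.rho hab.le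
  rcases lt_trichotomy t a with hta | rfl | hat
  · refine ⟨c, hc,
      smoothW_of_rle_eq hab (hw.1.append_singleton hc) hrle_c hh (by omega) hmm ?_⟩
    rwa [rhoEnd_of_le hta, ← rhoEnd_of_le hta.le]
  · -- a new run appends `a` to `ρ`, lengthening the last run appends `b`
    obtain ⟨γ, hγ | hγ, hsγ⟩ := hρ <;>
      rw [hρw, rhoEnd_of_le le_rfl, append_nil, hγ] at hsγ
    · refine ⟨d, hd, smoothW_of_rle_eq hab (hw.1.append_singleton hd) hrle_d hh (by omega)
        (forall_mem_append.2 ⟨hmm, by simp⟩) ?_⟩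
      rwa [rhoEnd_of_le ha, append_nil, ← append_assoc]
    · refine ⟨c, hc, smoothW_of_rle_eq hab (hw.1.append_singleton hc) hrle_c hh hab hmm ?_⟩
      rwa [rhoEnd_of_lt t.lt_succ_self]
  · rcases htb.lt_or_eq with htb | rfl
    · refine ⟨c, hc, smoothW_of_rle_eq hab (hw.1.append_singleton hc) hrle_c hh htb hmm ?_⟩
      rwa [rhoEnd_of_lt (hat.trans t.lt_succ_self), ← rhoEnd_of_lt hat]
    · refine ⟨d, hd, smoothW_of_rle_eq hab (hw.1.append_singleton hd) hrle_d hh (by omega)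
        (forall_mem_append.2 ⟨hmm, by simp⟩) ?_⟩
      rwa [rhoEnd_of_le ha, append_nil, ← append_assoc, ← rhoEnd_of_lt hat]

theorem SmoothW.exists_append_of_rho (ha : 0 < a) (hab : a < b) {w : List ℕ}
    (hw : SmoothW a b w) (hρ : ∃ γ, (γ = a ∨ γ = b) ∧ SmoothW a b (rhoW a b w ++ [γ])) :
    ∃ β, (β = a ∨ β = b) ∧ SmoothW a b (w ++ [β]) := by
  rcases eq_or_ne w [] with rfl | hne
  · exact hρ
  obtain ⟨t, c, u, ht, rfl, huc⟩ := exists_eq_append_replicate hne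
  rcases eq_or_ne u [] with rfl | hu
  · exact exists_smoothW_replicate_append ha hab ht hw
  · exact exists_smoothW_append_replicate_of_rho ha hab hu huc ht hw hρ

theorem SmoothW.exists_append (ha : 0 < a) (hab : a < b) {w : List ℕ} (hw : SmoothW a b w) :
    ∃ β, (β = a ∨ β = b) ∧ SmoothW a b (w ++ [β]) := by
  obtain ⟨k, hk⟩ := hw.2.2
  induction k generalizing w with
  | zero =>
    subst hk
    exact ⟨a, Or.inl rfl,
      smoothW_of_rle_eq_singleton hab (by simp [WordOver]) (rle_replicate a one_pos) ha⟩
  | succ k ih => exact hw.exists_append_of_rho ha hab (ih (hw.rho hab.le) hk)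

end Extension

section Reverse

variable {a b : ℕ}

theorem derW_reverse (v : List ℕ) : derW b v.reverse = (derW b v).reverse := by
  rcases eq_nil_or_eq_singleton_or_eq_cons_append (rle v) with hr | ⟨t, hr⟩ | ⟨h, mm, t, hr⟩
  · simp [derW, rle_reverse, hr, trimF]
  · rw [derW_of_rle_eq_singleton hr, derW_of_rle_eq_singleton (by rw [rle_reverse, hr]; rfl)]
    split_ifs <;> rfl
  · rw [derW_of_rle_eq hr,
      derW_of_rle_eq (h := t) (mm := mm.reverse) (t := h) (by simp [rle_reverse, hr])]
    split_ifs <;> simp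

theorem clos_reverse (w : List ℕ) : clos a b w.reverse = (clos a b w).reverse := by
  simp only [clos_eq, rle_reverse, headD_eq_head?_getD, getLastD_eq_getLast?, head?_reverse,
    getLast?_reverse, reverse_append, reverse_replicate, append_assoc]

theorem rhoW_reverse (w : List ℕ) : rhoW a b w.reverse = (rhoW a b w).reverse := by
  rw [rhoW, rhoW, clos_reverse, derW_reverse]

theorem DiffW.reverse {v : List ℕ} (hv : DiffW a b v) : DiffW a b v.reverse := by
  obtain ⟨hle, hint⟩ := hv
  refine ⟨fun t ht => hle t (by simpa [rle_reverse] using ht), fun t ht => hint t ?_⟩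
  simpa [rle_reverse, tail_reverse, dropLast_reverse, tail_dropLast] using ht

theorem SmoothW.reverse {w : List ℕ} (hw : SmoothW a b w) : SmoothW a b w.reverse := by
  have hiter : ∀ k, (rhoW a b)^[k] w.reverse = ((rhoW a b)^[k] w).reverse :=
    fun k => Function.Commute.iterate_left rhoW_reverse k w
  obtain ⟨hwo, hd, k, hk⟩ := hw
  refine ⟨fun c hc => hwo c (mem_reverse.1 hc), fun j => ?_, k, by rw [hiter, hk, reverse_nil]⟩
  rw [hiter, clos_reverse]
  exact (hd j).reverse

end Reverse

theorem stmt10 (a b : ℕ) (ha : 0 < a) (hab : a < b) (w : List ℕ)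
    (hw : SmoothW a b w) :
    (∃ α, (α = a ∨ α = b) ∧ SmoothW a b (α :: w)) ∧
    (∃ β, (β = a ∨ β = b) ∧ SmoothW a b (w ++ [β])) := by
  obtain ⟨α, hα, hs⟩ := hw.reverse.exists_append ha hab
  exact ⟨⟨α, hα, by simpa using hs.reverse⟩, hw.exists_append ha hab⟩
end

section
/- Derivative formula over {a,b} with a ≥ 3: if u·x·v is a smooth word over {a,b} (3 ≤ a < b) with x in D_{a,b} = {ε, a, b, aa, bb, ab, ba}, then there exists w ∈ D_{a,b} such that D(uxv) = D(u)·w·D(v). -/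
/-!
Cut `u` before its last run and `v` after its first run: `u = u' cⁿ` and `v = dᵐ v'`. Then
`uxv = u' y v'` with `y = cⁿ x dᵐ`, no run crosses the two cuts, and the run-length encodings
split as `Δ(uxv) = Δ(u') Δ(y) Δ(v')`, `Δ(u) = Δ(u') n`, `Δ(v) = m Δ(v')`. The word `y` has length
`n + |x| + m ≤ n + m + 2`, its first run has length at least `n` and its last at least `m`, so a
third run of `y` would be an interior run of `uxv` of length at most `2 < a`, which
differentiability forbids. With at most two runs in `y`, trimming the boundary runs shorter than `b` gives
`D(uxv) = D(u) w D(v)` with `|w| ≤ 2`; every letter of `D(uxv)` is `a` or `b`, and the words of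
length at most 2 over `{a, b}` are exactly `D_{a,b}`.
-/

open List

@[simp] theorem rle_nil : rle [] = [] := rfl

theorem rle_append_of_ne {p q : List ℕ} (h : ∀ x ∈ p.getLast?, ∀ y ∈ q.head?, x ≠ y) :
    rle (p ++ q) = rle p ++ rle q := by
  rw [rle, splitBy_append (by simpa using h), map_append, rle, rle]

theorem sum_rle (w : List ℕ) : (rle w).sum = w.length := by
  rw [rle, ← length_flatten, flatten_splitBy]

theorem exists_eq_replicate_append_s12 {α : Type*} (c : α) (r : List α) :
    ∃ k r', r = replicate k c ++ r' ∧ ∀ x ∈ r'.head?, x ≠ c := by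
  induction r with
  | nil => exact ⟨0, [], rfl, by simp⟩
  | cons e r ih =>
    by_cases he : e = c
    · obtain ⟨k, r', rfl, hr'⟩ := ih
      exact ⟨k + 1, r', by simp [he, replicate_succ], hr'⟩
    · exact ⟨0, e :: r, rfl, by simpa using he⟩

theorem exists_eq_append_replicate_s12 {α : Type*} (c : α) (r : List α) :
    ∃ r' k, r = r' ++ replicate k c ∧ ∀ x ∈ r'.getLast?, x ≠ c := by
  obtain ⟨k, r', hr, hr'⟩ := exists_eq_replicate_append_s12 c r.reverse
  refine ⟨r'.reverse, k, ?_, by simpa using hr'⟩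
  rw [← reverse_reverse r, hr]
  simp

theorem rle_replicate_append_s12 {n c : ℕ} {r : List ℕ} (hn : 0 < n) (hr : ∀ x ∈ r.head?, x ≠ c) :
    rle (replicate n c ++ r) = n :: rle r := by
  rw [rle_append_of_ne (by simpa [getLast?_replicate, hn.ne'] using fun y hy => (hr y hy).symm),
    rle_replicate c hn, singleton_append]

theorem rle_append_replicate_s12 {n c : ℕ} {r : List ℕ} (hn : 0 < n) (hr : ∀ x ∈ r.getLast?, x ≠ c) :
    rle (r ++ replicate n c) = rle r ++ [n] := by
  rw [rle_append_of_ne (by simpa [head?_replicate, hn.ne'] using hr), rle_replicate c hn]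

theorem le_headD_rle_replicate_append (n c : ℕ) (r : List ℕ) :
    n ≤ (rle (replicate n c ++ r)).headD 0 := by
  obtain ⟨k, r', rfl, hr'⟩ := exists_eq_replicate_append_s12 c r
  rcases Nat.eq_zero_or_pos (n + k) with h | h
  · omega
  · rw [← append_assoc, ← replicate_add, rle_replicate_append_s12 h hr']
    simp

theorem le_getLastD_rle_append_replicate (m c : ℕ) (r : List ℕ) :
    m ≤ (rle (r ++ replicate m c)).getLastD 0 := by
  obtain ⟨r', k, rfl, hr'⟩ := exists_eq_append_replicate_s12 c r
  rcases Nat.eq_zero_or_pos (k + m) with h | h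
  · omega
  · rw [append_assoc, ← replicate_add, rle_append_replicate_s12 h hr']
    simp

theorem exists_eq_append_lastRun (u : List ℕ) :
    ∃ u' n c, u = u' ++ replicate n c ∧ (∀ x ∈ u'.getLast?, x ≠ c) ∧ (n = 0 → u' = []) := by
  obtain ⟨u', n, hu, hu'⟩ := exists_eq_append_replicate_s12 (u.getLastD 0) u
  refine ⟨u', n, _, hu, hu', fun hn => ?_⟩
  rw [hn, replicate_zero, append_nil] at hu
  subst u
  by_contra hne
  have hlast := getLast?_eq_some_getLast hne
  exact hu' _ hlast (by simp [getLastD_eq_getLast?, hlast])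

theorem exists_eq_firstRun_append (v : List ℕ) :
    ∃ m d v', v = replicate m d ++ v' ∧ (∀ x ∈ v'.head?, x ≠ d) ∧ (m = 0 → v' = []) := by
  obtain ⟨m, v', hv, hv'⟩ := exists_eq_replicate_append_s12 (v.headD 0) v
  refine ⟨m, _, v', hv, hv', fun hm => ?_⟩
  rw [hm, replicate_zero, nil_append] at hv
  subst v
  rcases v' with _ | ⟨p, v'⟩
  · rfl
  · exact absurd rfl (hv' p rfl)

theorem mem_interior_iff {α : Type*} {q : α} {l : List α} :
    q ∈ (l.drop 1).dropLast ↔ ∃ l₁ l₂, l = l₁ ++ q :: l₂ ∧ l₁ ≠ [] ∧ l₂ ≠ [] := by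
  constructor
  · intro hq
    obtain ⟨A, B, hAB⟩ := append_of_mem hq
    rcases l with _ | ⟨p, l'⟩
    · simp at hq
    have hl' : l' ≠ [] := by rintro rfl; simp at hq
    refine ⟨p :: A, B ++ [l'.getLast hl'], ?_, by simp, by simp⟩
    simp only [drop_one, tail_cons] at hAB
    conv_lhs => rw [← dropLast_append_getLast hl', hAB]
    simp
  · rintro ⟨_ | ⟨p, l₁⟩, l₂, rfl, h₁, h₂⟩
    · exact absurd rfl h₁
    · simp [dropLast_append_of_ne_nil (cons_ne_nil q l₂),
        dropLast_cons_of_ne_nil h₂]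

theorem DiffW.of_cons {a b e : ℕ} {z : List ℕ} (h : DiffW a b (e :: z)) : DiffW a b z := by
  obtain ⟨k, z', rfl, hz'⟩ := exists_eq_replicate_append_s12 e z
  have hrle : rle (e :: (replicate k e ++ z')) = (k + 1) :: rle z' := by
    rw [← cons_append, ← replicate_succ]
    exact rle_replicate_append_s12 k.succ_pos hz'
  rw [DiffW, hrle] at h
  obtain ⟨hle, hint⟩ := h
  rcases Nat.eq_zero_or_pos k with rfl | hk
  · rw [replicate_zero, nil_append]
    refine ⟨fun t ht => hle t (mem_cons_of_mem _ ht), fun t ht => hint t ?_⟩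
    obtain ⟨l₁, l₂, hl, h₁, h₂⟩ := mem_interior_iff.mp ht
    exact mem_interior_iff.mpr ⟨1 :: l₁, l₂, by simp [hl], by simp, h₂⟩
  · rw [DiffW, rle_replicate_append_s12 hk hz']
    refine ⟨fun t ht => ?_, fun t ht => hint t ?_⟩
    · rcases mem_cons.mp ht with rfl | ht
      · exact (Nat.le_succ t).trans (hle _ mem_cons_self)
      · exact hle t (mem_cons_of_mem _ ht)
    · obtain ⟨_ | ⟨p, l₁⟩, l₂, hl, h₁, h₂⟩ := mem_interior_iff.mp ht
      · exact absurd rfl h₁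
      · rw [cons_append, cons.injEq] at hl
        exact mem_interior_iff.mpr ⟨(k + 1) :: l₁, l₂, by simp [hl.2], by simp, h₂⟩

theorem DiffW.of_concat {a b e : ℕ} {z : List ℕ} (h : DiffW a b (z ++ [e])) : DiffW a b z := by
  obtain ⟨z', k, rfl, hz'⟩ := exists_eq_append_replicate_s12 e z
  have hrle : rle (z' ++ replicate k e ++ [e]) = rle z' ++ [k + 1] := by
    rw [append_assoc, ← replicate_succ']
    exact rle_append_replicate_s12 k.succ_pos hz'
  rw [DiffW, hrle] at h
  obtain ⟨hle, hint⟩ := h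
  rcases Nat.eq_zero_or_pos k with rfl | hk
  · rw [replicate_zero, append_nil]
    refine ⟨fun t ht => hle t (mem_append_left _ ht), fun t ht => hint t ?_⟩
    obtain ⟨l₁, l₂, hl, h₁, h₂⟩ := mem_interior_iff.mp ht
    exact mem_interior_iff.mpr ⟨l₁, l₂ ++ [1], by simp [hl], h₁, by simp⟩
  · rw [DiffW, rle_append_replicate_s12 hk hz']
    refine ⟨fun t ht => ?_, fun t ht => hint t ?_⟩
    · rcases mem_append.mp ht with ht | ht
      · exact hle t (mem_append_left _ ht)
      · rw [mem_singleton.mp ht]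
        exact (Nat.le_succ k).trans (hle _ (mem_append_right _ (mem_singleton_self _)))
    · obtain ⟨l₁, l₂, hl, h₁, h₂⟩ := mem_interior_iff.mp ht
      obtain ⟨l₂, x, rfl⟩ := (eq_nil_or_concat l₂).resolve_left h₂
      rw [concat_eq_append, ← cons_append, ← append_assoc] at hl
      refine mem_interior_iff.mpr ⟨l₁, l₂ ++ [k + 1], ?_, h₁, by simp⟩
      rw [(append_inj' hl rfl).1, append_assoc, cons_append]

theorem DiffW.of_append_left {a b : ℕ} (p : List ℕ) {z : List ℕ} (h : DiffW a b (p ++ z)) :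
    DiffW a b z := by
  induction p with
  | nil => exact h
  | cons e p ih => exact ih h.of_cons

theorem DiffW.of_append_right {a b : ℕ} {z : List ℕ} (q : List ℕ) (h : DiffW a b (z ++ q)) :
    DiffW a b z := by
  induction q using reverseRecOn with
  | nil => simpa using h
  | append_singleton q e ih => exact ih (by rw [← append_assoc] at h; exact h.of_concat)

theorem DiffW.of_infix {a b : ℕ} {p z q : List ℕ} (h : DiffW a b (p ++ z ++ q)) :
    DiffW a b z :=
  (h.of_append_right q).of_append_left p

def trimL (b : ℕ) (r : List ℕ) : List ℕ := (trimF b r.reverse).reverse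

def trimEnds (b : ℕ) (r : List ℕ) : List ℕ := trimL b (trimF b r)

theorem derW_eq_trimEnds (b : ℕ) (w : List ℕ) : derW b w = trimEnds b (rle w) := rfl

@[simp] theorem derW_nil (b : ℕ) : derW b [] = [] := rfl

section Trim

variable {b : ℕ}

@[simp] theorem trimEnds_nil : trimEnds b [] = [] := rfl

@[simp] theorem trimL_nil : trimL b [] = [] := rfl

theorem trimF_singleton (p : ℕ) : trimF b [p] = if p < b then [] else [p] := rfl

theorem trimF_append {l : List ℕ} (r : List ℕ) (hl : l ≠ []) :
    trimF b (l ++ r) = trimF b l ++ r := by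
  obtain ⟨p, l, rfl⟩ := exists_cons_of_ne_nil hl
  simp only [cons_append, trimF]
  split_ifs <;> simp

theorem trimL_append (l : List ℕ) {r : List ℕ} (hr : r ≠ []) :
    trimL b (l ++ r) = l ++ trimL b r := by
  simp [trimL, trimF_append _ (reverse_ne_nil_iff.mpr hr)]

theorem trimL_singleton (p : ℕ) : trimL b [p] = trimF b [p] := by
  rw [trimL, reverse_singleton, trimF_singleton]
  split_ifs <;> rfl

theorem trimL_trimF_singleton (p : ℕ) : trimL b (trimF b [p]) = trimF b [p] := by
  rw [trimF_singleton]
  split_ifs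
  · rfl
  · rw [trimL_singleton, trimF_singleton, if_neg ‹_›]

theorem trimEnds_append {l r : List ℕ} (hl : l ≠ []) (hr : r ≠ []) :
    trimEnds b (l ++ r) = trimF b l ++ trimL b r := by
  rw [trimEnds, trimF_append _ hl, trimL_append _ hr]

theorem trimEnds_append_singleton (s : List ℕ) (p : ℕ) :
    trimEnds b (s ++ [p]) = trimF b s ++ trimF b [p] := by
  rcases eq_or_ne s [] with rfl | hs
  · exact trimL_trimF_singleton p
  · rw [trimEnds_append hs (cons_ne_nil p []), trimL_singleton]

theorem trimEnds_cons (p : ℕ) (t : List ℕ) : trimEnds b (p :: t) = trimF b [p] ++ trimL b t := by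
  rcases eq_or_ne t [] with rfl | ht
  · simpa [trimEnds] using trimL_trimF_singleton p
  · exact trimEnds_append (l := [p]) (cons_ne_nil p []) ht

theorem mem_trimF_singleton {c p : ℕ} : c ∈ trimF b [p] ↔ c = p ∧ b ≤ p := by
  rw [trimF_singleton]
  split_ifs <;> simp <;> omega

theorem mem_trimEnds {c : ℕ} {r : List ℕ} (hc : c ∈ trimEnds b r) :
    c ∈ (r.drop 1).dropLast ∨ (c ∈ r ∧ b ≤ c) := by
  rcases r with _ | ⟨p, r⟩
  · simp at hc
  obtain rfl | ⟨L, q, rfl⟩ := eq_nil_or_concat r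
  · rw [trimEnds_cons, trimL_nil, append_nil, mem_trimF_singleton] at hc
    obtain ⟨rfl, hbc⟩ := hc
    exact Or.inr ⟨mem_singleton_self c, hbc⟩
  rw [concat_eq_append, trimEnds_cons, trimL_append _ (cons_ne_nil q []), trimL_singleton,
    mem_append, mem_append, mem_trimF_singleton, mem_trimF_singleton] at hc
  rcases hc with ⟨rfl, hbc⟩ | hc | ⟨rfl, hbc⟩
  · exact Or.inr ⟨mem_cons_self, hbc⟩
  · obtain ⟨A, B, rfl⟩ := append_of_mem hc
    exact Or.inl (mem_interior_iff.mpr ⟨p :: A, B ++ [q], by simp, by simp, by simp⟩)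
  · exact Or.inr ⟨by simp, hbc⟩

theorem DiffW.mem_derW {a c : ℕ} {z : List ℕ} (hD : DiffW a b z) (hc : c ∈ derW b z) :
    c = a ∨ c = b := by
  rcases mem_trimEnds hc with h | ⟨h, hbc⟩
  · exact hD.2 c h
  · exact Or.inr (le_antisymm (hD.1 c h) hbc)

theorem exists_trimF_append_singleton (s : List ℕ) (p : ℕ) :
    ∃ l, (l = [p] ∨ l = trimF b [p]) ∧ trimF b (s ++ [p]) = trimF b s ++ l := by
  rcases eq_or_ne s [] with rfl | hs
  · exact ⟨trimF b [p], Or.inr rfl, rfl⟩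
  · exact ⟨[p], Or.inl rfl, trimF_append _ hs⟩

theorem exists_trimL_cons (p : ℕ) (t : List ℕ) :
    ∃ l, (l = [p] ∨ l = trimF b [p]) ∧ trimL b (p :: t) = l ++ trimL b t := by
  rcases eq_or_ne t [] with rfl | ht
  · exact ⟨trimF b [p], Or.inr rfl, by rw [trimL_singleton, trimL_nil, append_nil]⟩
  · exact ⟨[p], Or.inl rfl, trimL_append [p] ht⟩

theorem exists_trimEnds_append_cons (s : List ℕ) (p : ℕ) (t : List ℕ) :
    ∃ l, (l = [p] ∨ l = trimF b [p]) ∧ trimEnds b (s ++ p :: t) = trimF b s ++ l ++ trimL b t := by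
  rcases eq_or_ne t [] with rfl | ht
  · exact ⟨trimF b [p], Or.inr rfl, by simp [trimEnds_append_singleton]⟩
  · obtain ⟨l, hl, hs⟩ := exists_trimF_append_singleton (b := b) s p
    refine ⟨l, hl, ?_⟩
    rw [← singleton_append, ← append_assoc, trimEnds_append (by simp) ht, hs]

-- Runs are at most `b` long, so `trimF b [n]` is nonempty only when `n = P = b`.
theorem exists_eq_trimF_singleton_append {l : List ℕ} {n P : ℕ} (hl : l = [P] ∨ l = trimF b [P])
    (hn : n ≤ P) (hP : P ≤ b) :
    ∃ w, w.length ≤ 1 ∧ l = trimF b [n] ++ w ∧ l = w ++ trimF b [n] := by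
  by_cases hnb : n < b
  · refine ⟨l, ?_, by simp [trimF_singleton, hnb], by simp [trimF_singleton, hnb]⟩
    rcases hl with rfl | rfl
    · simp
    · rw [trimF_singleton]; split_ifs <;> simp
  · obtain ⟨rfl, rfl⟩ : n = P ∧ P = b := by omega
    refine ⟨[], by simp, ?_, ?_⟩ <;> rcases hl with rfl | rfl <;> simp [trimF_singleton]

theorem exists_trimEnds_single_run (hb : 0 < b) (s t : List ℕ) {n m P : ℕ} (hnm : n + m ≤ P)
    (hP : P ≤ b) :
    ∃ w, w.length ≤ 2 ∧
      trimEnds b (s ++ [P] ++ t) = trimEnds b (s ++ [n]) ++ w ++ trimEnds b (m :: t) := by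
  obtain ⟨l, hl, he⟩ := exists_trimEnds_append_cons (b := b) s P t
  rw [append_assoc, singleton_append, he, trimEnds_append_singleton, trimEnds_cons]
  by_cases hn : n < b
  · obtain ⟨w, hw, -, hlw⟩ := exists_eq_trimF_singleton_append hl (by omega : m ≤ P) hP
    exact ⟨w, by omega, by simp [hlw, trimF_singleton, hn]⟩
  · obtain ⟨w, hw, hlw, -⟩ := exists_eq_trimF_singleton_append hl (by omega : n ≤ P) hP
    exact ⟨w, by omega, by simp [hlw, trimF_singleton, (by omega : m < b)]⟩

theorem exists_trimEnds_two_runs (s t : List ℕ) {n m P₁ P₂ : ℕ} (hn : n ≤ P₁) (hP₁ : P₁ ≤ b)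
    (hm : m ≤ P₂) (hP₂ : P₂ ≤ b) :
    ∃ w, w.length ≤ 2 ∧
      trimEnds b (s ++ [P₁, P₂] ++ t) = trimEnds b (s ++ [n]) ++ w ++ trimEnds b (m :: t) := by
  obtain ⟨l₁, hl₁, h₁⟩ := exists_trimF_append_singleton (b := b) s P₁
  obtain ⟨l₂, hl₂, h₂⟩ := exists_trimL_cons (b := b) P₂ t
  obtain ⟨w₁, hw₁, hlw₁, -⟩ := exists_eq_trimF_singleton_append hl₁ hn hP₁
  obtain ⟨w₂, hw₂, -, hlw₂⟩ := exists_eq_trimF_singleton_append hl₂ hm hP₂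
  refine ⟨w₁ ++ w₂, by simp; omega, ?_⟩
  rw [show s ++ [P₁, P₂] ++ t = s ++ [P₁] ++ P₂ :: t by simp,
    trimEnds_append (by simp) (by simp), h₁, h₂, hlw₁, hlw₂, trimEnds_append_singleton,
    trimEnds_cons]
  simp

theorem length_le_two_of_sum_le {a : ℕ} {s M t : List ℕ} {n m : ℕ} (ha : 3 ≤ a) (hab : a < b)
    (hint : ∀ q ∈ ((s ++ M ++ t).drop 1).dropLast, q = a ∨ q = b)
    (hn : n ≤ M.headD 0) (hm : m ≤ M.getLastD 0) (hsum : M.sum ≤ n + m + 2) : M.length ≤ 2 := by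
  rcases M with _ | ⟨p, _ | ⟨q, _ | ⟨r, M⟩⟩⟩
  · simp
  · simp
  · simp
  have hq : q = a ∨ q = b :=
    hint q (mem_interior_iff.mpr ⟨s ++ [p], r :: M ++ t, by simp, by simp, by simp⟩)
  have hlast : (r :: M).getLastD 0 ≤ (r :: M).sum := by
    rw [getLastD_eq_getLast?, getLast?_eq_some_getLast (cons_ne_nil r M)]
    exact le_sum_of_mem (getLast_mem _)
  simp only [headD_cons, getLastD_cons, sum_cons] at hn hm hsum hlast
  omega

-- `s ++ [n]` and `m :: t` are the run lengths of `u` and `v`; `n = 0` (`m = 0`) encodes an empty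
-- `u` (`v`).
theorem exists_trimEnds_eq_append {a : ℕ} {s M t : List ℕ} {n m : ℕ} (ha : 3 ≤ a) (hab : a < b)
    (hle : ∀ p ∈ M, p ≤ b) (hint : ∀ q ∈ ((s ++ M ++ t).drop 1).dropLast, q = a ∨ q = b)
    (hn : n ≤ M.headD 0) (hm : m ≤ M.getLastD 0) (hsum : n + m ≤ M.sum) (hsum' : M.sum ≤ n + m + 2)
    (hs : n = 0 → s = []) (ht : m = 0 → t = []) :
    ∃ w, w.length ≤ 2 ∧
      trimEnds b (s ++ M ++ t) = trimEnds b (s ++ [n]) ++ w ++ trimEnds b (m :: t) := by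
  have hM := length_le_two_of_sum_le ha hab hint hn hm hsum'
  rcases M with _ | ⟨P, _ | ⟨P₂, _ | ⟨_, _⟩⟩⟩
  · obtain ⟨rfl, rfl⟩ : n = 0 ∧ m = 0 := by simp at hsum; omega
    rw [hs rfl, ht rfl]
    refine ⟨[], by simp, ?_⟩
    simp [trimEnds_cons, trimF_singleton, (by omega : 0 < b)]
  · exact exists_trimEnds_single_run (by omega) s t (by simpa using hsum) (hle P (by simp))
  · exact exists_trimEnds_two_runs s t (by simpa using hn) (hle P (by simp)) (by simpa using hm)
      (hle P₂ (by simp))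
  · simp at hM

end Trim

theorem derW_append_replicate {b : ℕ} (hb : 0 < b) {u' : List ℕ} {n c : ℕ}
    (hu' : ∀ x ∈ u'.getLast?, x ≠ c) (hn : n = 0 → u' = []) :
    derW b (u' ++ replicate n c) = trimEnds b (rle u' ++ [n]) := by
  rcases Nat.eq_zero_or_pos n with rfl | hpos
  · simp [hn rfl, trimEnds_cons, trimF_singleton, hb]
  · rw [derW_eq_trimEnds, rle_append_replicate_s12 hpos hu']

theorem derW_replicate_append {b : ℕ} (hb : 0 < b) {v' : List ℕ} {m d : ℕ}
    (hv' : ∀ x ∈ v'.head?, x ≠ d) (hm : m = 0 → v' = []) :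
    derW b (replicate m d ++ v') = trimEnds b (m :: rle v') := by
  rcases Nat.eq_zero_or_pos m with rfl | hpos
  · simp [hm rfl, trimEnds_cons, trimF_singleton, hb]
  · rw [derW_eq_trimEnds, rle_replicate_append_s12 hpos hv']

theorem exists_derW_append_append {a b : ℕ} (ha : 3 ≤ a) (hab : a < b) {u x v : List ℕ}
    (hx : x.length ≤ 2) (hD : DiffW a b (u ++ x ++ v)) :
    ∃ w, w.length ≤ 2 ∧ derW b (u ++ x ++ v) = derW b u ++ w ++ derW b v := by
  obtain ⟨u', n, c, rfl, hu', hn⟩ := exists_eq_append_lastRun u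
  obtain ⟨m, d, v', rfl, hv', hm⟩ := exists_eq_firstRun_append v
  set y := replicate n c ++ x ++ replicate m d with hy
  have hz : u' ++ replicate n c ++ x ++ (replicate m d ++ v') = u' ++ y ++ v' := by simp [y]
  have hrle : rle (u' ++ y ++ v') = rle u' ++ rle y ++ rle v' := by
    rw [rle_append_of_ne, rle_append_of_ne]
    · rcases Nat.eq_zero_or_pos n with h | h
      · simp [hn h]
      · simpa [y, h.ne', head?_replicate] using hu'
    · rcases Nat.eq_zero_or_pos m with h | h
      · simp [hm h]
      · simpa [y, h.ne', getLast?_replicate] using fun x hx => (hv' x hx).symm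
  rw [hz, DiffW, hrle] at hD
  rw [hz, derW_eq_trimEnds, hrle, derW_append_replicate (by omega) hu' hn,
    derW_replicate_append (by omega) hv' hm]
  have hsum : (rle y).sum = n + x.length + m := by
    rw [sum_rle, hy, length_append, length_append, length_replicate, length_replicate]
  refine exists_trimEnds_eq_append ha hab (fun p hp => hD.1 p (by simp [hp])) hD.2 ?_ ?_
    (by omega) (by omega) (fun h => by simp [hn h]) (fun h => by simp [hm h])
  · rw [hy, append_assoc]
    exact le_headD_rle_replicate_append n c _
  · exact le_getLastD_rle_append_replicate m d _

-- The set D_{a,b} of the statement.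
def smallWords (a b : ℕ) : List (List ℕ) := [[], [a], [b], [a,a], [b,b], [a,b], [b,a]]

theorem mem_smallWords_iff {a b : ℕ} {w : List ℕ} :
    w ∈ smallWords a b ↔ w.length ≤ 2 ∧ ∀ c ∈ w, c = a ∨ c = b := by
  constructor
  · intro hw
    simp only [smallWords, mem_cons, not_mem_nil, or_false] at hw
    rcases hw with rfl | rfl | rfl | rfl | rfl | rfl | rfl <;> simp
  · rintro ⟨hw, h⟩
    match w, hw with
    | [], _ => simp [smallWords]
    | [c], _ => rcases h c (by simp) with rfl | rfl <;> simp [smallWords]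
    | [c, d], _ =>
      rcases h c (by simp) with rfl | rfl <;> rcases h d (by simp) with rfl | rfl <;>
        simp [smallWords]

theorem stmt12 (a b : ℕ) (ha : 3 ≤ a) (hab : a < b) (u x v : List ℕ)
    (hx : x ∈ ([[], [a], [b], [a,a], [b,b], [a,b], [b,a]] : List (List ℕ)))
    (h : SmoothW a b (u ++ x ++ v)) :
    ∃ w ∈ ([[], [a], [b], [a,a], [b,b], [a,b], [b,a]] : List (List ℕ)),
      derW b (u ++ x ++ v) = derW b u ++ w ++ derW b v := by
  -- `clos` only pads a word on both sides, so `u ++ x ++ v` is a factor of its closure.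
  have hD : DiffW a b (u ++ x ++ v) := DiffW.of_infix (h.2.1 0)
  obtain ⟨w, hw, hder⟩ := exists_derW_append_append ha hab (mem_smallWords_iff.mp hx).1 hD
  refine ⟨w, mem_smallWords_iff.mpr ⟨hw, fun c hc => hD.mem_derW ?_⟩, hder⟩
  rw [hder]
  exact mem_append_left _ (mem_append_right _ hc)
end
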